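/- arXiv:1612.05905 — 2 statements merged into one kernel-verified Lean document; each statement's English description precedes it below -/
import Mathlib

section
/- Vaughan's identity (Davenport's form): Let f : ℕ → ℂ be any complex-valued function and let U, V, X be real numbers with 1 < U, V ≤ X. Then Σ_{n ≤ X} Λ(n) f(n) ≪ Σ₁ + Σ₂·log(UV) + Σ₃·log X + |Σ₄|, with an absolute implied constant, where Σ₁ = |Σ_{n ≤ U} Λ(n) f(n)|, Σ₂ = Σ_{v ≤ UV} |Σ_{s ≤ X/v} f(sv)|, Σ₃ = Σ_{v ≤ V} max_{w ≥ 1} |Σ_{w ≤ s ≤ X/v} f(sv)|, and Σ₄ = Σ_{uv ≤ X, u > U, v > V} Λ(u) ( Σ_{d | v, d ≤ V} μ(d) ) f(uv). -/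
open ArithmeticFunction Finset
open scoped ArithmeticFunction.Moebius


lemma box_eq (N : ℕ) (F : ℕ → ℕ → ℂ) :
    ∑ n ∈ Icc 1 N, ∑ p ∈ n.divisorsAntidiagonal, F p.1 p.2
    = ∑ m ∈ Icc 1 N, ∑ k ∈ Icc 1 N, if m * k ≤ N then F m k else 0 := by
  have hs := Finset.sum_sigma (Icc 1 N) (fun n => n.divisorsAntidiagonal)
    (fun x : Σ _ : ℕ, ℕ × ℕ => F x.2.1 x.2.2)
  rw [← hs, ← Finset.sum_product', ← Finset.sum_filter]
  apply Finset.sum_nbij' (i := fun p => (p.2.1, p.2.2))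
    (j := fun p => ⟨p.1 * p.2, (p.1, p.2)⟩)
  · rintro ⟨n, m, k⟩ hp
    simp only [Finset.mem_sigma, Finset.mem_Icc, Nat.mem_divisorsAntidiagonal] at hp
    obtain ⟨⟨h1, h2⟩, h3, h4⟩ := hp
    simp only [Finset.mem_filter, Finset.mem_product, Finset.mem_Icc]
    have hm : m ≠ 0 := by rintro rfl; simp at h3; omega
    have hk : k ≠ 0 := by rintro rfl; simp at h3; omega
    subst h3
    refine ⟨⟨⟨Nat.one_le_iff_ne_zero.2 hm, ?_⟩, Nat.one_le_iff_ne_zero.2 hk, ?_⟩, h2⟩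
    · calc m ≤ m * k := Nat.le_mul_of_pos_right m (Nat.pos_of_ne_zero hk)
        _ ≤ N := h2
    · calc k ≤ m * k := Nat.le_mul_of_pos_left k (Nat.pos_of_ne_zero hm)
        _ ≤ N := h2
  · rintro ⟨m, k⟩ hp
    simp only [Finset.mem_filter, Finset.mem_product, Finset.mem_Icc] at hp
    obtain ⟨⟨⟨h1, h2⟩, h3, h4⟩, h5⟩ := hp
    simp only [Finset.mem_sigma, Finset.mem_Icc, Nat.mem_divisorsAntidiagonal]
    exact ⟨⟨Nat.one_le_iff_ne_zero.2 (by positivity), h5⟩, trivial, by positivity⟩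
  · rintro ⟨n, m, k⟩ hp
    simp only [Finset.mem_sigma, Nat.mem_divisorsAntidiagonal] at hp
    simp [hp.2.1]
  · rintro ⟨m, k⟩ _; rfl
  · rintro ⟨n, m, k⟩ _; rfl

lemma log_telescope : ∀ h : ℕ, 1 ≤ h →
    ∑ w ∈ Icc 1 (h - 1), (Real.log (w + 1) - Real.log w) = Real.log h
  | 1, _ => by simp
  | (n+2), _ => by
      have ih := log_telescope (n+1) (by omega)
      have e1 : (n+2) - 1 = n + 1 := by omega
      have e2 : (n+1) - 1 = n := by omega
      simp only [Nat.add_sub_cancel] at ih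
      rw [e1, Finset.sum_Icc_succ_top (by omega : 1 ≤ n+1), ih]
      push_cast; ring_nf

/-- Abel-type bound: `‖∑_{h≤N} log h · g h‖ ≤ log X · M` if every tail sum has norm `≤ M`. -/
lemma abel_log (N : ℕ) (g : ℕ → ℂ) (M X : ℝ) (hM : 0 ≤ M) (hX : 1 ≤ X) (hN : (N : ℝ) ≤ X)
    (hb : ∀ w : ℕ, ‖∑ s ∈ Icc (w + 1) N, g s‖ ≤ M) :
    ‖∑ h ∈ Icc 1 N, (Real.log h : ℂ) * g h‖ ≤ Real.log X * M := by
  have hlogX : 0 ≤ Real.log X := Real.log_nonneg hX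
  rcases Nat.eq_zero_or_pos N with h0 | hNpos
  · simp [h0]; positivity
  -- rewrite log h as a telescoping sum over w ∈ Icc 1 (N-1) with indicator w < h
  have key : ∑ h ∈ Icc 1 N, (Real.log h : ℂ) * g h
      = ∑ w ∈ Icc 1 (N - 1), ((Real.log (w + 1) - Real.log w : ℝ) : ℂ) *
          ∑ h ∈ Icc (w + 1) N, g h := by
    have step : ∀ h ∈ Icc 1 N, (Real.log h : ℂ) * g h
        = ∑ w ∈ Icc 1 (N - 1), (if w < h then ((Real.log (w + 1) - Real.log w : ℝ) : ℂ) * g h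
            else 0) := by
      intro h hh
      rw [Finset.mem_Icc] at hh
      have : ∑ w ∈ Icc 1 (N - 1), (if w < h then ((Real.log (w+1) - Real.log w : ℝ) : ℂ) * g h
          else 0) = (∑ w ∈ Icc 1 (h - 1), ((Real.log (w+1) - Real.log w : ℝ) : ℂ)) * g h := by
        rw [← Finset.sum_filter, Finset.sum_mul,
          show (Icc 1 (N-1)).filter (fun w => w < h) = Icc 1 (h-1) by
            ext w; simp only [Finset.mem_filter, Finset.mem_Icc]; omega]
      rw [this]
      congr 1
      rw [← Complex.ofReal_sum]
      norm_cast
      push_cast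
      exact (log_telescope h hh.1).symm
    rw [Finset.sum_congr rfl step, Finset.sum_comm' (s := Icc 1 N) (t := fun _ => Icc 1 (N-1))
      (t' := Icc 1 (N-1)) (s' := fun _ => Icc 1 N) (by intro x y; simp)]
    refine Finset.sum_congr rfl fun w hw => ?_
    rw [Finset.mem_Icc] at hw
    rw [← Finset.sum_filter .. , Finset.mul_sum]
    · congr 1
      · ext h; simp only [Finset.mem_filter, Finset.mem_Icc]; omega
  rw [key]
  calc ‖∑ w ∈ Icc 1 (N-1), ((Real.log (w+1) - Real.log w : ℝ) : ℂ) * ∑ h ∈ Icc (w+1) N, g h‖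
      ≤ ∑ w ∈ Icc 1 (N-1), (Real.log (w+1) - Real.log w) * M := by
        refine (norm_sum_le _ _).trans (Finset.sum_le_sum fun w hw => ?_)
        rw [norm_mul, Complex.norm_real]
        rw [Finset.mem_Icc] at hw
        have hd : 0 ≤ Real.log (w+1) - Real.log w := by
          have h1 : (0:ℝ) < w := by exact_mod_cast hw.1
          have := Real.log_le_log h1 (by linarith : (w:ℝ) ≤ (w:ℝ)+1)
          linarith
        rw [Real.norm_of_nonneg hd]
        exact mul_le_mul_of_nonneg_left (hb w) hd
    _ = Real.log N * M := by rw [← Finset.sum_mul, log_telescope N hNpos]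
    _ ≤ Real.log X * M := by
        refine mul_le_mul_of_nonneg_right ?_ hM
        exact Real.log_le_log (by exact_mod_cast hNpos) hN

lemma inner_rewrite (F : ℕ → ℂ) (X : ℝ) (hX : 0 ≤ X) (v : ℕ) (hv : 1 ≤ v) :
    ∑ r ∈ Icc 1 ⌊X⌋₊, (if v * r ≤ ⌊X⌋₊ then F r else 0) = ∑ r ∈ Icc 1 ⌊X / v⌋₊, F r := by
  rw [← Finset.sum_filter]
  congr 1
  ext r
  simp only [Finset.mem_filter, Finset.mem_Icc]
  have hv' : (0:ℝ) < v := by exact_mod_cast hv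
  constructor
  · rintro ⟨⟨h1, _⟩, h3⟩
    refine ⟨h1, Nat.le_floor ?_⟩
    rw [le_div_iff₀ hv']
    have : ((v * r : ℕ) : ℝ) ≤ X := Nat.le_floor_iff' (by positivity) |>.1 h3
    push_cast at this; linarith [this]
  · rintro ⟨h1, h2⟩
    have h2' : (r : ℝ) ≤ X / v := (Nat.le_floor_iff (by positivity)).1 h2
    have hvr : ((v * r : ℕ) : ℝ) ≤ X := by
      push_cast
      rw [le_div_iff₀ hv'] at h2'
      linarith
    have h3 : v * r ≤ ⌊X⌋₊ := Nat.le_floor hvr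
    exact ⟨⟨h1, le_trans (Nat.le_mul_of_pos_left r (by omega)) h3⟩, h3⟩

lemma moebius_divisor_sum (k : ℕ) : ∑ d ∈ k.divisors, (μ d : ℤ) = if k = 1 then 1 else 0 := by
  have := congrFun (congrArg DFunLike.coe moebius_mul_coe_zeta) k
  rwa [coe_mul_zeta_apply, one_apply] at this

lemma gk_cast (V : ℝ) (k : ℕ) :
    ∑ p ∈ k.divisorsAntidiagonal, (if (p.1 : ℝ) ≤ V then ((μ p.1 : ℤ) : ℂ) else 0)
      = (((∑ d ∈ k.divisors.filter (fun d : ℕ => (d : ℝ) ≤ V), μ d : ℤ)) : ℂ) := by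
  rw [Nat.sum_divisorsAntidiagonal (f := fun d _ => if (d : ℝ) ≤ V then ((μ d : ℤ) : ℂ) else 0)]
  rw [← Finset.sum_filter]
  push_cast
  rfl

lemma gk_zero (V : ℝ) (k : ℕ) (hk2 : 2 ≤ k) (hkV : (k : ℝ) ≤ V) :
    (∑ d ∈ k.divisors.filter (fun d : ℕ => (d : ℝ) ≤ V), μ d : ℤ) = 0 := by
  rw [Finset.filter_true_of_mem, moebius_divisor_sum, if_neg (by omega)]
  intro d hd
  have := Nat.divisor_le hd
  calc (d : ℝ) ≤ k := by exact_mod_cast this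
    _ ≤ V := hkV

lemma gk_one (V : ℝ) (hV : 1 ≤ V) :
    (∑ d ∈ (1:ℕ).divisors.filter (fun d : ℕ => (d : ℝ) ≤ V), μ d : ℤ) = 1 := by
  rw [Nat.divisors_one]
  rw [Finset.filter_singleton, if_pos (by exact_mod_cast hV)]
  simp

lemma cv_norm (U V : ℝ) (v : ℕ) :
    ‖∑ p ∈ v.divisorsAntidiagonal,
        (if (p.1 : ℝ) ≤ U ∧ (p.2 : ℝ) ≤ V then ((Λ p.1 : ℝ) : ℂ) * ((μ p.2 : ℤ) : ℂ) else 0)‖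
      ≤ Real.log v := by
  refine (norm_sum_le _ _).trans ?_
  have : ∀ p ∈ v.divisorsAntidiagonal,
      ‖if (p.1 : ℝ) ≤ U ∧ (p.2 : ℝ) ≤ V then ((Λ p.1 : ℝ) : ℂ) * ((μ p.2 : ℤ) : ℂ) else 0‖
        ≤ Λ p.1 := by
    intro p _
    split_ifs with h
    · rw [norm_mul, Complex.norm_real, Real.norm_of_nonneg vonMangoldt_nonneg]
      have h1 : ‖((μ p.2 : ℤ) : ℂ)‖ ≤ 1 := by
        rcases moebius_eq_or p.2 with h2 | h2 | h2 <;> rw [h2] <;> norm_num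
      calc Λ p.1 * ‖((μ p.2 : ℤ) : ℂ)‖ ≤ Λ p.1 * 1 :=
            mul_le_mul_of_nonneg_left h1 vonMangoldt_nonneg
        _ = Λ p.1 := mul_one _
    · simp [vonMangoldt_nonneg]
  refine (Finset.sum_le_sum this).trans ?_
  rw [Nat.sum_divisorsAntidiagonal (f := fun m _ => Λ m), vonMangoldt_sum]

lemma cv_supp (U V : ℝ) (hU : 0 < U) (hV : 0 < V) (v : ℕ) (hv : U * V < (v : ℝ)) :
    ∑ p ∈ v.divisorsAntidiagonal,
        (if (p.1 : ℝ) ≤ U ∧ (p.2 : ℝ) ≤ V then ((Λ p.1 : ℝ) : ℂ) * ((μ p.2 : ℤ) : ℂ) else 0)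
      = 0 := by
  refine Finset.sum_eq_zero fun p hp => ?_
  rw [Nat.mem_divisorsAntidiagonal] at hp
  rw [if_neg]
  rintro ⟨h1, h2⟩
  have : (v : ℝ) = (p.1 : ℝ) * (p.2 : ℝ) := by rw [← hp.1]; push_cast; ring
  nlinarith [this, h1, h2, hv, hU.le, hV.le, (by positivity : (0:ℝ) ≤ (p.1:ℝ))]

lemma if_split (P Q : Prop) [Decidable P] [Decidable Q] (x : ℂ) :
    (if P then x else 0) = (if P ∧ Q then x else 0) + (if P ∧ ¬Q then x else 0) := by
  by_cases hP : P <;> by_cases hQ : Q <;> simp [hP, hQ]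

lemma step2 (f : ℕ → ℂ) (U V X : ℝ) :
    (∑ d ∈ Icc 1 ⌊X⌋₊, ∑ m ∈ Icc 1 ⌊X⌋₊, ∑ r ∈ Icc 1 ⌊X⌋₊,
        (if d * (m * r) ≤ ⌊X⌋₊ ∧ (d : ℝ) ≤ V then
          ((μ d : ℤ) : ℂ) * ((Λ m : ℝ) : ℂ) * f (m * r * d) else 0))
    = (∑ d ∈ Icc 1 ⌊X⌋₊, ∑ m ∈ Icc 1 ⌊X⌋₊, ∑ r ∈ Icc 1 ⌊X⌋₊,
        (if (d * (m * r) ≤ ⌊X⌋₊ ∧ (d : ℝ) ≤ V) ∧ (m : ℝ) ≤ U then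
          ((μ d : ℤ) : ℂ) * ((Λ m : ℝ) : ℂ) * f (m * r * d) else 0))
      + (∑ d ∈ Icc 1 ⌊X⌋₊, ∑ m ∈ Icc 1 ⌊X⌋₊, ∑ r ∈ Icc 1 ⌊X⌋₊,
        (if (d * (m * r) ≤ ⌊X⌋₊ ∧ (d : ℝ) ≤ V) ∧ ¬((m : ℝ) ≤ U) then
          ((μ d : ℤ) : ℂ) * ((Λ m : ℝ) : ℂ) * f (m * r * d) else 0)) := by
  rw [← Finset.sum_add_distrib]
  refine Finset.sum_congr rfl fun d _ => ?_
  rw [← Finset.sum_add_distrib]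
  refine Finset.sum_congr rfl fun m _ => ?_
  rw [← Finset.sum_add_distrib]
  refine Finset.sum_congr rfl fun r _ => ?_
  exact if_split _ _ _

lemma step0 (f : ℕ → ℂ) (U X : ℝ) (hU0 : (0:ℝ) < U) (hUX : U ≤ X) :
    ∑ n ∈ Icc 1 ⌊X⌋₊, (Λ n : ℂ) * f n
      = (∑ n ∈ Icc 1 ⌊U⌋₊, (Λ n : ℂ) * f n)
        + ∑ n ∈ Icc 1 ⌊X⌋₊, (if U < (n : ℝ) then (Λ n : ℂ) * f n else 0) := by
  have key : ∀ n ∈ Icc 1 ⌊X⌋₊, (Λ n : ℂ) * f n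
      = (if (n:ℝ) ≤ U then (Λ n : ℂ) * f n else 0) + (if U < (n:ℝ) then (Λ n : ℂ) * f n else 0) := by
    intro n _
    rcases le_or_gt (n:ℝ) U with h | h
    · rw [if_pos h, if_neg (not_lt.2 h), add_zero]
    · rw [if_neg (not_le.2 h), if_pos h, zero_add]
  rw [Finset.sum_congr rfl key, Finset.sum_add_distrib]
  congr 1
  rw [← Finset.sum_filter]
  congr 1
  ext n
  simp only [Finset.mem_filter, Finset.mem_Icc]
  constructor
  · rintro ⟨⟨a, _⟩, c⟩; exact ⟨a, Nat.le_floor c⟩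
  · rintro ⟨a, b⟩
    have hb : (n:ℝ) ≤ U := (Nat.le_floor_iff hU0.le).1 b
    exact ⟨⟨a, Nat.le_floor (hb.trans hUX)⟩, hb⟩

lemma step1 (f : ℕ → ℂ) (V X : ℝ) :
    (∑ d ∈ Icc 1 ⌊X⌋₊, ∑ h ∈ Icc 1 ⌊X⌋₊, (if d * h ≤ ⌊X⌋₊ ∧ (d : ℝ) ≤ V then
        ((μ d : ℤ) : ℂ) * ((Real.log h : ℝ) : ℂ) * f (h * d) else 0))
    = ∑ d ∈ Icc 1 ⌊X⌋₊, ∑ m ∈ Icc 1 ⌊X⌋₊, ∑ r ∈ Icc 1 ⌊X⌋₊,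
        (if d * (m * r) ≤ ⌊X⌋₊ ∧ (d : ℝ) ≤ V then
          ((μ d : ℤ) : ℂ) * ((Λ m : ℝ) : ℂ) * f (m * r * d) else 0) := by
  refine Finset.sum_congr rfl fun d hd => ?_
  have hd1 : 1 ≤ d := (Finset.mem_Icc.1 hd).1
  have e1 : ∀ h ∈ Icc 1 ⌊X⌋₊,
      (if d * h ≤ ⌊X⌋₊ ∧ (d : ℝ) ≤ V then ((μ d : ℤ) : ℂ) * ((Real.log h : ℝ) : ℂ) * f (h * d) else 0)
      = ∑ p ∈ h.divisorsAntidiagonal,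
          (if d * (p.1 * p.2) ≤ ⌊X⌋₊ ∧ (d : ℝ) ≤ V then
            ((μ d : ℤ) : ℂ) * ((Λ p.1 : ℝ) : ℂ) * f (p.1 * p.2 * d) else 0) := by
    intro h hh
    have congr1 : ∀ p ∈ h.divisorsAntidiagonal,
        (if d * (p.1 * p.2) ≤ ⌊X⌋₊ ∧ (d : ℝ) ≤ V then
            ((μ d : ℤ) : ℂ) * ((Λ p.1 : ℝ) : ℂ) * f (p.1 * p.2 * d) else 0)
        = (if d * h ≤ ⌊X⌋₊ ∧ (d : ℝ) ≤ V then
            ((μ d : ℤ) : ℂ) * ((Λ p.1 : ℝ) : ℂ) * f (h * d) else 0) := by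
      intro p hp
      rw [(Nat.mem_divisorsAntidiagonal.1 hp).1]
    rw [Finset.sum_congr rfl congr1]
    split_ifs with hc
    · have hlog : ∑ p ∈ h.divisorsAntidiagonal, ((Λ p.1 : ℝ) : ℂ) = ((Real.log h : ℝ) : ℂ) := by
        rw [← Complex.ofReal_sum]
        congr 1
        rw [Nat.sum_divisorsAntidiagonal (f := fun m _ => Λ m), vonMangoldt_sum]
      calc ((μ d : ℤ) : ℂ) * ((Real.log h : ℝ) : ℂ) * f (h * d)
          = (∑ p ∈ h.divisorsAntidiagonal, ((Λ p.1 : ℝ) : ℂ)) * (((μ d : ℤ) : ℂ) * f (h * d)) := by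
            rw [hlog]; ring
        _ = ∑ p ∈ h.divisorsAntidiagonal,
              ((μ d : ℤ) : ℂ) * ((Λ p.1 : ℝ) : ℂ) * f (h * d) := by
            rw [Finset.sum_mul]; refine Finset.sum_congr rfl fun p _ => by ring
    · simp
  rw [Finset.sum_congr rfl e1,
    box_eq ⌊X⌋₊ (fun m r => if d * (m * r) ≤ ⌊X⌋₊ ∧ (d : ℝ) ≤ V then
      ((μ d : ℤ) : ℂ) * ((Λ m : ℝ) : ℂ) * f (m * r * d) else 0)]
  refine Finset.sum_congr rfl fun m _ => Finset.sum_congr rfl fun r _ => ?_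
  rcases le_or_gt (m * r) ⌊X⌋₊ with h | h
  · rw [if_pos h]
  · rw [if_neg (not_le.2 h), if_neg]
    rintro ⟨hc, -⟩
    have : m * r ≤ d * (m * r) := Nat.le_mul_of_pos_left _ (by omega)
    omega

lemma step3 (f : ℕ → ℂ) (U V X : ℝ) (hX0 : (0:ℝ) ≤ X) :
    (∑ d ∈ Icc 1 ⌊X⌋₊, ∑ m ∈ Icc 1 ⌊X⌋₊, ∑ r ∈ Icc 1 ⌊X⌋₊,
        (if (d * (m * r) ≤ ⌊X⌋₊ ∧ (d : ℝ) ≤ V) ∧ (m : ℝ) ≤ U then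
          ((μ d : ℤ) : ℂ) * ((Λ m : ℝ) : ℂ) * f (m * r * d) else 0))
    = ∑ v ∈ Icc 1 ⌊X⌋₊,
        (∑ p ∈ v.divisorsAntidiagonal, (if (p.1 : ℝ) ≤ U ∧ (p.2 : ℝ) ≤ V then
          ((Λ p.1 : ℝ) : ℂ) * ((μ p.2 : ℤ) : ℂ) else 0)) * ∑ s ∈ Icc 1 ⌊X / (v:ℝ)⌋₊, f (s * v) := by
  -- reorder the sums to r; m; d
  rw [Finset.sum_comm]   -- now m; d; r  (swap d and m)
  -- goal: ∑ m ∑ d ∑ r ...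
  have swap2 : ∀ m ∈ Icc 1 ⌊X⌋₊, (∑ d ∈ Icc 1 ⌊X⌋₊, ∑ r ∈ Icc 1 ⌊X⌋₊,
        (if (d * (m * r) ≤ ⌊X⌋₊ ∧ (d : ℝ) ≤ V) ∧ (m : ℝ) ≤ U then
          ((μ d : ℤ) : ℂ) * ((Λ m : ℝ) : ℂ) * f (m * r * d) else 0))
      = ∑ r ∈ Icc 1 ⌊X⌋₊, ∑ d ∈ Icc 1 ⌊X⌋₊,
        (if (d * (m * r) ≤ ⌊X⌋₊ ∧ (d : ℝ) ≤ V) ∧ (m : ℝ) ≤ U then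
          ((μ d : ℤ) : ℂ) * ((Λ m : ℝ) : ℂ) * f (m * r * d) else 0) := fun m _ => Finset.sum_comm
  rw [Finset.sum_congr rfl swap2, Finset.sum_comm]
  -- now r; m; d : convert termwise to the box form in (m, d)
  have conv : ∀ r ∈ Icc 1 ⌊X⌋₊, ∀ m ∈ Icc 1 ⌊X⌋₊, ∀ d ∈ Icc 1 ⌊X⌋₊,
      (if (d * (m * r) ≤ ⌊X⌋₊ ∧ (d : ℝ) ≤ V) ∧ (m : ℝ) ≤ U then
          ((μ d : ℤ) : ℂ) * ((Λ m : ℝ) : ℂ) * f (m * r * d) else 0)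
      = (if m * d ≤ ⌊X⌋₊ then
          (if (m * d) * r ≤ ⌊X⌋₊ ∧ ((m : ℝ) ≤ U ∧ (d : ℝ) ≤ V) then
            ((Λ m : ℝ) : ℂ) * ((μ d : ℤ) : ℂ) * f (r * (m * d)) else 0) else 0) := by
    intro r hr m _ d _
    have hr1 : 1 ≤ r := (Finset.mem_Icc.1 hr).1
    have e : d * (m * r) = (m * d) * r := by ring
    have earg : m * r * d = r * (m * d) := by ring
    have himp : (m * d) * r ≤ ⌊X⌋₊ → m * d ≤ ⌊X⌋₊ := fun h =>
      le_trans (Nat.le_mul_of_pos_right _ (by omega)) h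
    by_cases h1 : (m * d) * r ≤ ⌊X⌋₊
    · rw [if_pos (himp h1)]
      by_cases h2 : (m : ℝ) ≤ U
      · by_cases h3 : (d : ℝ) ≤ V
        · rw [if_pos ⟨⟨e ▸ h1, h3⟩, h2⟩, if_pos ⟨h1, h2, h3⟩, earg]; ring
        · rw [if_neg (fun hc => h3 hc.1.2), if_neg (fun hc => h3 hc.2.2)]
      · rw [if_neg (fun hc => h2 hc.2), if_neg (fun hc => h2 hc.2.1)]
    · rw [if_neg (fun hc => h1 (e ▸ hc.1.1))]
      by_cases h4 : m * d ≤ ⌊X⌋₊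
      · rw [if_pos h4, if_neg (fun hc => h1 hc.1)]
      · rw [if_neg h4]
  rw [Finset.sum_congr rfl fun r hr => Finset.sum_congr rfl fun m hm =>
    Finset.sum_congr rfl fun d hd => conv r hr m hm d hd]
  -- apply box_eq backwards inside the r-sum
  have boxed : ∀ r ∈ Icc 1 ⌊X⌋₊, (∑ m ∈ Icc 1 ⌊X⌋₊, ∑ d ∈ Icc 1 ⌊X⌋₊,
      (if m * d ≤ ⌊X⌋₊ then
          (if (m * d) * r ≤ ⌊X⌋₊ ∧ ((m : ℝ) ≤ U ∧ (d : ℝ) ≤ V) then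
            ((Λ m : ℝ) : ℂ) * ((μ d : ℤ) : ℂ) * f (r * (m * d)) else 0) else 0))
      = ∑ v ∈ Icc 1 ⌊X⌋₊, (if v * r ≤ ⌊X⌋₊ then
          (∑ p ∈ v.divisorsAntidiagonal, (if (p.1 : ℝ) ≤ U ∧ (p.2 : ℝ) ≤ V then
            ((Λ p.1 : ℝ) : ℂ) * ((μ p.2 : ℤ) : ℂ) else 0)) * f (r * v) else 0) := by
    intro r _
    rw [← box_eq ⌊X⌋₊ (fun m d =>
      if (m * d) * r ≤ ⌊X⌋₊ ∧ ((m : ℝ) ≤ U ∧ (d : ℝ) ≤ V) then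
        ((Λ m : ℝ) : ℂ) * ((μ d : ℤ) : ℂ) * f (r * (m * d)) else 0)]
    refine Finset.sum_congr rfl fun v _ => ?_
    have inner : ∀ p ∈ v.divisorsAntidiagonal,
        (if (p.1 * p.2) * r ≤ ⌊X⌋₊ ∧ ((p.1 : ℝ) ≤ U ∧ (p.2 : ℝ) ≤ V) then
          ((Λ p.1 : ℝ) : ℂ) * ((μ p.2 : ℤ) : ℂ) * f (r * (p.1 * p.2)) else 0)
        = (if v * r ≤ ⌊X⌋₊ then
            (if (p.1 : ℝ) ≤ U ∧ (p.2 : ℝ) ≤ V then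
              ((Λ p.1 : ℝ) : ℂ) * ((μ p.2 : ℤ) : ℂ) else 0) * f (r * v) else 0) := by
      intro p hp
      rw [(Nat.mem_divisorsAntidiagonal.1 hp).1]
      by_cases h1 : v * r ≤ ⌊X⌋₊ <;> by_cases h2 : (p.1 : ℝ) ≤ U ∧ (p.2 : ℝ) ≤ V <;>
        simp [h1, h2]
    rw [Finset.sum_congr rfl inner]
    by_cases h1 : v * r ≤ ⌊X⌋₊
    · simp only [h1, if_true, ← Finset.sum_mul]
    · simp [h1]
  rw [Finset.sum_congr rfl boxed, Finset.sum_comm]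
  -- now v outer, r inner; pull the coefficient out and apply inner_rewrite
  refine Finset.sum_congr rfl fun v hv => ?_
  have hv1 : 1 ≤ v := (Finset.mem_Icc.1 hv).1
  have pull : ∀ r ∈ Icc 1 ⌊X⌋₊, (if v * r ≤ ⌊X⌋₊ then
      (∑ p ∈ v.divisorsAntidiagonal, (if (p.1 : ℝ) ≤ U ∧ (p.2 : ℝ) ≤ V then
        ((Λ p.1 : ℝ) : ℂ) * ((μ p.2 : ℤ) : ℂ) else 0)) * f (r * v) else 0)
      = (∑ p ∈ v.divisorsAntidiagonal, (if (p.1 : ℝ) ≤ U ∧ (p.2 : ℝ) ≤ V then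
        ((Λ p.1 : ℝ) : ℂ) * ((μ p.2 : ℤ) : ℂ) else 0)) *
          (if v * r ≤ ⌊X⌋₊ then f (r * v) else 0) := by
    intro r _
    by_cases h1 : v * r ≤ ⌊X⌋₊ <;> simp [h1]
  rw [Finset.sum_congr rfl pull, ← Finset.mul_sum,
    inner_rewrite (fun r => f (r * v)) X hX0 v hv1]



lemma step4 (f : ℕ → ℂ) (U V X : ℝ) (hV : 1 < V) (hX0 : (0:ℝ) ≤ X) (hN1 : 1 ≤ ⌊X⌋₊) :
    (∑ d ∈ Icc 1 ⌊X⌋₊, ∑ m ∈ Icc 1 ⌊X⌋₊, ∑ r ∈ Icc 1 ⌊X⌋₊,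
        (if (d * (m * r) ≤ ⌊X⌋₊ ∧ (d : ℝ) ≤ V) ∧ ¬((m : ℝ) ≤ U) then
          ((μ d : ℤ) : ℂ) * ((Λ m : ℝ) : ℂ) * f (m * r * d) else 0))
    = (∑ u ∈ Icc 1 ⌊X⌋₊, ∑ v ∈ Icc 1 ⌊X⌋₊, if U < (u : ℝ) ∧ V < (v : ℝ) ∧ ((u * v : ℕ) : ℝ) ≤ X then
        (Λ u : ℂ) * (((∑ d ∈ v.divisors.filter (fun d : ℕ => (d : ℝ) ≤ V), μ d : ℤ)) : ℂ)
          * f (u * v) else 0)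
      + ∑ n ∈ Icc 1 ⌊X⌋₊, (if U < (n : ℝ) then (Λ n : ℂ) * f n else 0) := by
  -- swap d and m
  rw [Finset.sum_comm]
  -- termwise: convert to box form in (d, r), for fixed m
  have conv : ∀ m ∈ Icc 1 ⌊X⌋₊, ∀ d ∈ Icc 1 ⌊X⌋₊, ∀ r ∈ Icc 1 ⌊X⌋₊,
      (if (d * (m * r) ≤ ⌊X⌋₊ ∧ (d : ℝ) ≤ V) ∧ ¬((m : ℝ) ≤ U) then
          ((μ d : ℤ) : ℂ) * ((Λ m : ℝ) : ℂ) * f (m * r * d) else 0)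
      = (if d * r ≤ ⌊X⌋₊ then
          (if m * (d * r) ≤ ⌊X⌋₊ ∧ U < (m : ℝ) then
            ((Λ m : ℝ) : ℂ) * (if (d : ℝ) ≤ V then ((μ d : ℤ) : ℂ) else 0) * f (m * (d * r))
          else 0) else 0) := by
    intro m hm d _ r _
    have hm1 : 1 ≤ m := (Finset.mem_Icc.1 hm).1
    have e : d * (m * r) = m * (d * r) := by ring
    have earg : m * r * d = m * (d * r) := by ring
    have himp : m * (d * r) ≤ ⌊X⌋₊ → d * r ≤ ⌊X⌋₊ := fun h =>
      le_trans (Nat.le_mul_of_pos_left _ (by omega)) h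
    rw [e, earg]
    by_cases h1 : m * (d * r) ≤ ⌊X⌋₊ <;> by_cases h2 : (d : ℝ) ≤ V <;>
      by_cases h3 : (m : ℝ) ≤ U <;> by_cases h4 : d * r ≤ ⌊X⌋₊ <;>
      simp only [h1, h2, h3, h4, not_le, not_true, not_false_iff, and_true, true_and,
        and_false, false_and, if_true, if_false, ite_true, ite_false] <;>
      first
        | (exact absurd (himp h1) h4)
        | (rw [if_neg (not_lt.2 h3)]; try ring)
        | (rw [if_pos (not_le.1 h3)]; try ring)
        | ring
        | tauto
        | simp_all
  rw [Finset.sum_congr rfl fun m hm => Finset.sum_congr rfl fun d hd =>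
    Finset.sum_congr rfl fun r hr => conv m hm d hd r hr]
  -- box_eq in (d, r) → sum over k and its divisor antidiagonal
  have boxed : ∀ m ∈ Icc 1 ⌊X⌋₊, (∑ d ∈ Icc 1 ⌊X⌋₊, ∑ r ∈ Icc 1 ⌊X⌋₊,
      (if d * r ≤ ⌊X⌋₊ then
          (if m * (d * r) ≤ ⌊X⌋₊ ∧ U < (m : ℝ) then
            ((Λ m : ℝ) : ℂ) * (if (d : ℝ) ≤ V then ((μ d : ℤ) : ℂ) else 0) * f (m * (d * r))
          else 0) else 0))
      = ∑ k ∈ Icc 1 ⌊X⌋₊, (if m * k ≤ ⌊X⌋₊ ∧ U < (m : ℝ) then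
          ((Λ m : ℝ) : ℂ) *
            (((∑ d ∈ k.divisors.filter (fun d : ℕ => (d : ℝ) ≤ V), μ d : ℤ)) : ℂ) * f (m * k)
        else 0) := by
    intro m _
    rw [← box_eq ⌊X⌋₊ (fun d r =>
      if m * (d * r) ≤ ⌊X⌋₊ ∧ U < (m : ℝ) then
        ((Λ m : ℝ) : ℂ) * (if (d : ℝ) ≤ V then ((μ d : ℤ) : ℂ) else 0) * f (m * (d * r))
      else 0)]
    refine Finset.sum_congr rfl fun k _ => ?_
    have inner : ∀ p ∈ k.divisorsAntidiagonal,
        (if m * (p.1 * p.2) ≤ ⌊X⌋₊ ∧ U < (m : ℝ) then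
          ((Λ m : ℝ) : ℂ) * (if (p.1 : ℝ) ≤ V then ((μ p.1 : ℤ) : ℂ) else 0) * f (m * (p.1 * p.2))
        else 0)
        = (if m * k ≤ ⌊X⌋₊ ∧ U < (m : ℝ) then
          ((Λ m : ℝ) : ℂ) * (if (p.1 : ℝ) ≤ V then ((μ p.1 : ℤ) : ℂ) else 0) * f (m * k)
        else 0) := by
      intro p hp
      rw [(Nat.mem_divisorsAntidiagonal.1 hp).1]
    rw [Finset.sum_congr rfl inner]
    by_cases h1 : m * k ≤ ⌊X⌋₊ ∧ U < (m : ℝ)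
    · conv_rhs => rw [if_pos h1, ← gk_cast V k, Finset.mul_sum, Finset.sum_mul]
      exact Finset.sum_congr rfl fun p _ => if_pos h1
    · rw [if_neg h1]
      exact Finset.sum_eq_zero fun p _ => if_neg h1
  rw [Finset.sum_congr rfl boxed]
  -- split on V < k
  have split : ∀ m ∈ Icc 1 ⌊X⌋₊, ∀ k ∈ Icc 1 ⌊X⌋₊,
      (if m * k ≤ ⌊X⌋₊ ∧ U < (m : ℝ) then
          ((Λ m : ℝ) : ℂ) *
            (((∑ d ∈ k.divisors.filter (fun d : ℕ => (d : ℝ) ≤ V), μ d : ℤ)) : ℂ) * f (m * k)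
        else 0)
      = (if U < (m : ℝ) ∧ V < (k : ℝ) ∧ ((m * k : ℕ) : ℝ) ≤ X then
          ((Λ m : ℝ) : ℂ) *
            (((∑ d ∈ k.divisors.filter (fun d : ℕ => (d : ℝ) ≤ V), μ d : ℤ)) : ℂ) * f (m * k)
        else 0)
        + (if k = 1 ∧ U < (m : ℝ) then ((Λ m : ℝ) : ℂ) * f m else 0) := by
    intro m hm k hk
    have hk1 : 1 ≤ k := (Finset.mem_Icc.1 hk).1
    have hfl : m * k ≤ ⌊X⌋₊ ↔ ((m * k : ℕ) : ℝ) ≤ X := Nat.le_floor_iff hX0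
    rw [if_split ((m * k ≤ ⌊X⌋₊ ∧ U < (m : ℝ))) (V < (k : ℝ))]
    congr 1
    · apply if_congr _ rfl rfl
      constructor
      · rintro ⟨⟨a, b⟩, c⟩; exact ⟨b, c, hfl.1 a⟩
      · rintro ⟨a, b, c⟩; exact ⟨⟨hfl.2 c, a⟩, b⟩
    · -- the k ≤ V part: nonzero only for k = 1
      by_cases hk1' : k = 1
      · subst hk1'
        have hmk : m * 1 = m := by ring
        have hVk : ¬ V < ((1:ℕ) : ℝ) := by push_cast; linarith
        by_cases h2 : U < (m : ℝ)
        · rw [if_pos ⟨⟨by simpa [hmk] using (Finset.mem_Icc.1 hm).2, h2⟩, hVk⟩,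
            if_pos ⟨rfl, h2⟩, gk_one V hV.le, hmk]
          push_cast; ring
        · rw [if_neg (fun hc => h2 hc.1.2), if_neg (fun hc => h2 hc.2)]
      · by_cases hc : (m * k ≤ ⌊X⌋₊ ∧ U < (m : ℝ)) ∧ ¬ V < (k : ℝ)
        · rw [if_pos hc, if_neg (fun hc2 => hk1' hc2.1), gk_zero V k (by omega) (not_lt.1 hc.2)]
          push_cast; ring
        · rw [if_neg hc, if_neg (fun hc2 => hk1' hc2.1)]
  rw [Finset.sum_congr rfl fun m hm => Finset.sum_congr rfl fun k hk => split m hm k hk]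
  have distrib : ∀ m ∈ Icc 1 ⌊X⌋₊, ∑ k ∈ Icc 1 ⌊X⌋₊, ( (if U < (m : ℝ) ∧ V < (k : ℝ) ∧ ((m * k : ℕ) : ℝ) ≤ X then
          ((Λ m : ℝ) : ℂ) *
            (((∑ d ∈ k.divisors.filter (fun d : ℕ => (d : ℝ) ≤ V), μ d : ℤ)) : ℂ) * f (m * k)
        else 0)
        + (if k = 1 ∧ U < (m : ℝ) then ((Λ m : ℝ) : ℂ) * f m else 0))
      = (∑ k ∈ Icc 1 ⌊X⌋₊, if U < (m : ℝ) ∧ V < (k : ℝ) ∧ ((m * k : ℕ) : ℝ) ≤ X then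
          ((Λ m : ℝ) : ℂ) *
            (((∑ d ∈ k.divisors.filter (fun d : ℕ => (d : ℝ) ≤ V), μ d : ℤ)) : ℂ) * f (m * k)
        else 0) + (if U < (m : ℝ) then ((Λ m : ℝ) : ℂ) * f m else 0) := by
    intro m _
    rw [Finset.sum_add_distrib]
    congr 1
    rw [Finset.sum_eq_single_of_mem 1 (by simp [hN1])
      (fun b _ hb => if_neg (fun hc => hb hc.1))]
    exact if_congr (by simp) rfl rfl
  rw [Finset.sum_congr rfl distrib, Finset.sum_add_distrib]

lemma step5 (f : ℕ → ℂ) (U V X : ℝ) (hU : 1 < U) (hV : 1 < V) :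
    ‖∑ v ∈ Icc 1 ⌊X⌋₊, (∑ p ∈ v.divisorsAntidiagonal,
        (if (p.1 : ℝ) ≤ U ∧ (p.2 : ℝ) ≤ V then ((Λ p.1 : ℝ) : ℂ) * ((μ p.2 : ℤ) : ℂ) else 0))
          * ∑ s ∈ Icc 1 ⌊X / (v:ℝ)⌋₊, f (s * v)‖
      ≤ (∑ v ∈ Icc 1 ⌊U * V⌋₊, ‖∑ s ∈ Icc 1 ⌊X / v⌋₊, f (s * v)‖) * Real.log (U * V) := by
  have hU0 : (0:ℝ) < U := by linarith
  have hV0 : (0:ℝ) < V := by linarith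
  have hUV1 : 1 < U * V := by nlinarith
  have hlog : 0 ≤ Real.log (U * V) := Real.log_nonneg hUV1.le
  set cv : ℕ → ℂ := fun v => ∑ p ∈ v.divisorsAntidiagonal,
      (if (p.1 : ℝ) ≤ U ∧ (p.2 : ℝ) ≤ V then ((Λ p.1 : ℝ) : ℂ) * ((μ p.2 : ℤ) : ℂ) else 0)
    with hcv
  set W : ℕ → ℂ := fun v => ∑ s ∈ Icc 1 ⌊X / (v:ℝ)⌋₊, f (s * v) with hW
  calc ‖∑ v ∈ Icc 1 ⌊X⌋₊, cv v * W v‖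
      ≤ ∑ v ∈ Icc 1 ⌊X⌋₊, ‖cv v‖ * ‖W v‖ := by
        refine (norm_sum_le _ _).trans (le_of_eq ?_)
        exact Finset.sum_congr rfl fun v _ => norm_mul _ _
    _ = ∑ v ∈ (Icc 1 ⌊X⌋₊).filter (fun v => v ≤ ⌊U * V⌋₊), ‖cv v‖ * ‖W v‖ := by
        refine (Finset.sum_filter_of_ne fun v _ hne => ?_).symm
        by_contra hgt
        have h0 : ⌊U * V⌋₊ < v := not_le.1 hgt
        have h1 : U * V < (v : ℝ) := (Nat.floor_lt (by positivity)).1 h0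
        exact hne (by rw [hcv]; simp only [cv_supp U V hU0 hV0 v h1, norm_zero, zero_mul])
    _ ≤ ∑ v ∈ (Icc 1 ⌊X⌋₊).filter (fun v => v ≤ ⌊U * V⌋₊), Real.log (U * V) * ‖W v‖ := by
        refine Finset.sum_le_sum fun v hv => ?_
        rw [Finset.mem_filter, Finset.mem_Icc] at hv
        have hv1 : (0:ℝ) < v := by exact_mod_cast hv.1.1
        have hvUV : (v : ℝ) ≤ U * V := (Nat.le_floor_iff (by positivity)).1 hv.2
        refine mul_le_mul_of_nonneg_right ((cv_norm U V v).trans ?_) (norm_nonneg _)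
        exact Real.log_le_log hv1 hvUV
    _ ≤ ∑ v ∈ Icc 1 ⌊U * V⌋₊, Real.log (U * V) * ‖W v‖ := by
        refine Finset.sum_le_sum_of_subset_of_nonneg ?_ fun v _ _ => by positivity
        intro v hv
        rw [Finset.mem_filter, Finset.mem_Icc] at hv
        exact Finset.mem_Icc.2 ⟨hv.1.1, hv.2⟩
    _ = (∑ v ∈ Icc 1 ⌊U * V⌋₊, ‖W v‖) * Real.log (U * V) := by
        rw [Finset.sum_mul]
        exact Finset.sum_congr rfl fun v _ => mul_comm _ _

lemma step6 (f : ℕ → ℂ) (V X : ℝ) (hV : 1 < V) (hVX : V ≤ X) (hX1 : 1 < X) :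
    ‖∑ d ∈ Icc 1 ⌊X⌋₊, ∑ h ∈ Icc 1 ⌊X⌋₊, (if d * h ≤ ⌊X⌋₊ ∧ (d : ℝ) ≤ V then
        ((μ d : ℤ) : ℂ) * ((Real.log h : ℝ) : ℂ) * f (h * d) else 0)‖
      ≤ (∑ v ∈ Icc 1 ⌊V⌋₊, ⨆ w : ℕ, ‖∑ s ∈ Icc (w + 1) ⌊X / v⌋₊, f (s * v)‖) * Real.log X := by
  have hX0 : (0:ℝ) ≤ X := by linarith
  have hlogX : 0 ≤ Real.log X := Real.log_nonneg hX1.le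
  set M : ℕ → ℝ := fun d => ⨆ w : ℕ, ‖∑ s ∈ Icc (w + 1) ⌊X / (d:ℝ)⌋₊, f (s * d)‖ with hM
  have hMnonneg : ∀ d, 0 ≤ M d := fun d => Real.iSup_nonneg fun w => norm_nonneg _
  have hbdd : ∀ d : ℕ, BddAbove (Set.range fun w : ℕ => ‖∑ s ∈ Icc (w + 1) ⌊X / (d:ℝ)⌋₊, f (s * d)‖) := by
    intro d
    refine ⟨∑ s ∈ Icc 1 ⌊X / (d:ℝ)⌋₊, ‖f (s * d)‖, ?_⟩
    rintro _ ⟨w, rfl⟩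
    refine (norm_sum_le _ _).trans ?_
    exact Finset.sum_le_sum_of_subset_of_nonneg
      (Finset.Icc_subset_Icc (by omega) le_rfl) (fun _ _ _ => norm_nonneg _)
  have hMle : ∀ d : ℕ, ∀ w : ℕ, ‖∑ s ∈ Icc (w + 1) ⌊X / (d:ℝ)⌋₊, f (s * d)‖ ≤ M d :=
    fun d w => le_ciSup (hbdd d) w
  -- reshape each d-term
  have reshape : ∀ d ∈ Icc 1 ⌊X⌋₊,
      (∑ h ∈ Icc 1 ⌊X⌋₊, (if d * h ≤ ⌊X⌋₊ ∧ (d : ℝ) ≤ V then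
        ((μ d : ℤ) : ℂ) * ((Real.log h : ℝ) : ℂ) * f (h * d) else 0))
      = (if (d : ℝ) ≤ V then
          ((μ d : ℤ) : ℂ) * ∑ h ∈ Icc 1 ⌊X / (d:ℝ)⌋₊, ((Real.log h : ℝ) : ℂ) * f (h * d)
        else 0) := by
    intro d hd
    have hd1 : 1 ≤ d := (Finset.mem_Icc.1 hd).1
    by_cases hdV : (d : ℝ) ≤ V
    · rw [if_pos hdV]
      have e1 : ∀ h ∈ Icc 1 ⌊X⌋₊, (if d * h ≤ ⌊X⌋₊ ∧ (d : ℝ) ≤ V then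
            ((μ d : ℤ) : ℂ) * ((Real.log h : ℝ) : ℂ) * f (h * d) else 0)
          = (if d * h ≤ ⌊X⌋₊ then ((μ d : ℤ) : ℂ) * (((Real.log h : ℝ) : ℂ) * f (h * d)) else 0) := by
        intro h _
        by_cases hc : d * h ≤ ⌊X⌋₊
        · rw [if_pos ⟨hc, hdV⟩, if_pos hc]; ring
        · rw [if_neg (fun hx => hc hx.1), if_neg hc]
      rw [Finset.sum_congr rfl e1,
        inner_rewrite (fun h => ((μ d : ℤ) : ℂ) * (((Real.log h : ℝ) : ℂ) * f (h * d))) X hX0 d hd1,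
        Finset.mul_sum]
    · rw [if_neg hdV]
      exact Finset.sum_eq_zero fun h _ => if_neg (fun hc => hdV hc.2)
  rw [Finset.sum_congr rfl reshape]
  calc ‖∑ d ∈ Icc 1 ⌊X⌋₊, (if (d : ℝ) ≤ V then
          ((μ d : ℤ) : ℂ) * ∑ h ∈ Icc 1 ⌊X / (d:ℝ)⌋₊, ((Real.log h : ℝ) : ℂ) * f (h * d)
        else 0)‖
      ≤ ∑ d ∈ Icc 1 ⌊X⌋₊, (if (d : ℝ) ≤ V then
          ‖((μ d : ℤ) : ℂ) * ∑ h ∈ Icc 1 ⌊X / (d:ℝ)⌋₊, ((Real.log h : ℝ) : ℂ) * f (h * d)‖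
        else 0) := by
        refine (norm_sum_le _ _).trans (le_of_eq (Finset.sum_congr rfl fun d _ => ?_))
        by_cases hdV : (d : ℝ) ≤ V <;> simp [hdV]
    _ = ∑ d ∈ Icc 1 ⌊V⌋₊,
          ‖((μ d : ℤ) : ℂ) * ∑ h ∈ Icc 1 ⌊X / (d:ℝ)⌋₊, ((Real.log h : ℝ) : ℂ) * f (h * d)‖ := by
        rw [← Finset.sum_filter]
        congr 1
        ext d
        simp only [Finset.mem_filter, Finset.mem_Icc]
        constructor
        · rintro ⟨⟨a, _⟩, c⟩; exact ⟨a, Nat.le_floor c⟩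
        · rintro ⟨a, b⟩
          have hb : (d:ℝ) ≤ V := (Nat.le_floor_iff (by linarith)).1 b
          exact ⟨⟨a, Nat.le_floor (hb.trans hVX)⟩, hb⟩
    _ ≤ ∑ d ∈ Icc 1 ⌊V⌋₊, Real.log X * M d := by
        refine Finset.sum_le_sum fun d hd => ?_
        have hd1 : 1 ≤ d := (Finset.mem_Icc.1 hd).1
        rw [norm_mul]
        have hmu : ‖((μ d : ℤ) : ℂ)‖ ≤ 1 := by
          rcases moebius_eq_or d with h2 | h2 | h2 <;> rw [h2] <;> norm_num
        have hfl : ((⌊X / (d:ℝ)⌋₊ : ℕ) : ℝ) ≤ X := by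
          refine (Nat.floor_le (by positivity)).trans ?_
          exact div_le_self hX0 (by exact_mod_cast hd1)
        have habel := abel_log ⌊X / (d:ℝ)⌋₊ (fun s => f (s * d)) (M d) X (hMnonneg d)
          hX1.le hfl (hMle d)
        calc ‖((μ d : ℤ) : ℂ)‖ * ‖∑ h ∈ Icc 1 ⌊X / (d:ℝ)⌋₊, ((Real.log h : ℝ) : ℂ) * f (h * d)‖
            ≤ 1 * (Real.log X * M d) := by
              refine mul_le_mul hmu ?_ (norm_nonneg _) zero_le_one
              exact habel
          _ = Real.log X * M d := one_mul _
    _ = (∑ v ∈ Icc 1 ⌊V⌋₊, M v) * Real.log X := by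
        rw [Finset.sum_mul]
        exact Finset.sum_congr rfl fun v _ => mul_comm _ _

/-- Lemma 2.5 (Vaughan's identity, Davenport's form): for any `f : ℕ → ℂ` and real
numbers `1 < U, V ≤ X`,
`Σ_{n ≤ X} Λ(n) f(n) ≪ Σ₁ + Σ₂ log(UV) + Σ₃ log X + |Σ₄|`
with an absolute implied constant. -/
theorem vaughan_identity :
    ∃ c : ℝ, 0 < c ∧
      ∀ f : ℕ → ℂ, ∀ U V X : ℝ, 1 < U → 1 < V → U ≤ X → V ≤ X →
        ‖∑ n ∈ Finset.Icc 1 ⌊X⌋₊, (Λ n : ℂ) * f n‖ ≤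
          c * (‖∑ n ∈ Finset.Icc 1 ⌊U⌋₊, (Λ n : ℂ) * f n‖
            + (∑ v ∈ Finset.Icc 1 ⌊U * V⌋₊, ‖∑ s ∈ Finset.Icc 1 ⌊X / v⌋₊, f (s * v)‖)
                * Real.log (U * V)
            + (∑ v ∈ Finset.Icc 1 ⌊V⌋₊,
                ⨆ w : ℕ, ‖∑ s ∈ Finset.Icc (w + 1) ⌊X / v⌋₊, f (s * v)‖) * Real.log X
            + ‖∑ u ∈ Finset.Icc 1 ⌊X⌋₊, ∑ v ∈ Finset.Icc 1 ⌊X⌋₊,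
                if U < (u : ℝ) ∧ V < (v : ℝ) ∧ ((u * v : ℕ) : ℝ) ≤ X then
                  (Λ u : ℂ) *
                    (((∑ d ∈ v.divisors.filter (fun d : ℕ => (d : ℝ) ≤ V), μ d : ℤ)) : ℂ) *
                    f (u * v)
                else 0‖) := by
  refine ⟨1, one_pos, ?_⟩
  intro f U V X hU hV hUX hVX
  have hX1 : 1 < X := lt_of_lt_of_le hU hUX
  have hX0 : (0:ℝ) ≤ X := by linarith
  have hU0 : (0:ℝ) < U := by linarith
  have hV0 : (0:ℝ) < V := by linarith
  have hUV1 : 1 < U * V := by nlinarith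
  have hN1 : 1 ≤ ⌊X⌋₊ := Nat.le_floor (by exact_mod_cast hX1.le)
  -- Step 0: split off the initial segment n ≤ U
  have hsplit : ∑ n ∈ Icc 1 ⌊X⌋₊, (Λ n : ℂ) * f n = (∑ n ∈ Icc 1 ⌊U⌋₊, (Λ n : ℂ) * f n) + (∑ n ∈ Icc 1 ⌊X⌋₊, (if U < (n : ℝ) then (Λ n : ℂ) * f n else 0)) := step0 f U X hU0 hUX
  -- Step 1: S3 (box form) equals the triple sum
  have h1 : (∑ d ∈ Icc 1 ⌊X⌋₊, ∑ h ∈ Icc 1 ⌊X⌋₊, (if d * h ≤ ⌊X⌋₊ ∧ (d : ℝ) ≤ V then ((μ d : ℤ) : ℂ) * ((Real.log h : ℝ) : ℂ) * f (h * d) else 0)) = ∑ d ∈ Icc 1 ⌊X⌋₊, ∑ m ∈ Icc 1 ⌊X⌋₊, ∑ r ∈ Icc 1 ⌊X⌋₊, (if d * (m * r) ≤ ⌊X⌋₊ ∧ (d : ℝ) ≤ V then ((μ d : ℤ) : ℂ) * ((Λ m : ℝ) : ℂ) * f (m * r * d) else 0) := step1 f V X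
  -- Step 2: split the triple sum at m ≤ U
  have h2 : (∑ d ∈ Icc 1 ⌊X⌋₊, ∑ m ∈ Icc 1 ⌊X⌋₊, ∑ r ∈ Icc 1 ⌊X⌋₊, (if d * (m * r) ≤ ⌊X⌋₊ ∧ (d : ℝ) ≤ V then ((μ d : ℤ) : ℂ) * ((Λ m : ℝ) : ℂ) * f (m * r * d) else 0)) = (∑ d ∈ Icc 1 ⌊X⌋₊, ∑ m ∈ Icc 1 ⌊X⌋₊, ∑ r ∈ Icc 1 ⌊X⌋₊, (if (d * (m * r) ≤ ⌊X⌋₊ ∧ (d : ℝ) ≤ V) ∧ (m : ℝ) ≤ U then ((μ d : ℤ) : ℂ) * ((Λ m : ℝ) : ℂ) * f (m * r * d) else 0)) + (∑ d ∈ Icc 1 ⌊X⌋₊, ∑ m ∈ Icc 1 ⌊X⌋₊, ∑ r ∈ Icc 1 ⌊X⌋₊, (if (d * (m * r) ≤ ⌊X⌋₊ ∧ (d : ℝ) ≤ V) ∧ ¬((m : ℝ) ≤ U) then ((μ d : ℤ) : ℂ) * ((Λ m : ℝ) : ℂ) * f (m * r * d) else 0)) := step2 f U V X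
  -- Step 3: P1 = S2
  have h3 : (∑ d ∈ Icc 1 ⌊X⌋₊, ∑ m ∈ Icc 1 ⌊X⌋₊, ∑ r ∈ Icc 1 ⌊X⌋₊, (if (d * (m * r) ≤ ⌊X⌋₊ ∧ (d : ℝ) ≤ V) ∧ (m : ℝ) ≤ U then ((μ d : ℤ) : ℂ) * ((Λ m : ℝ) : ℂ) * f (m * r * d) else 0)) = ∑ v ∈ Icc 1 ⌊X⌋₊, (∑ p ∈ (v).divisorsAntidiagonal, (if (p.1 : ℝ) ≤ U ∧ (p.2 : ℝ) ≤ V then ((Λ p.1 : ℝ) : ℂ) * ((μ p.2 : ℤ) : ℂ) else 0)) * ∑ s ∈ Icc 1 ⌊X / (v:ℝ)⌋₊, f (s * v) := step3 f U V X hX0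
  -- Step 4: P2 = S4 + T'
  have h4 : (∑ d ∈ Icc 1 ⌊X⌋₊, ∑ m ∈ Icc 1 ⌊X⌋₊, ∑ r ∈ Icc 1 ⌊X⌋₊, (if (d * (m * r) ≤ ⌊X⌋₊ ∧ (d : ℝ) ≤ V) ∧ ¬((m : ℝ) ≤ U) then ((μ d : ℤ) : ℂ) * ((Λ m : ℝ) : ℂ) * f (m * r * d) else 0)) = (∑ u ∈ Icc 1 ⌊X⌋₊, ∑ v ∈ Icc 1 ⌊X⌋₊, if U < (u : ℝ) ∧ V < (v : ℝ) ∧ ((u * v : ℕ) : ℝ) ≤ X then (Λ u : ℂ) * (((∑ d ∈ (v).divisors.filter (fun d : ℕ => (d : ℝ) ≤ V), μ d : ℤ)) : ℂ) * f (u * v) else 0) + (∑ n ∈ Icc 1 ⌊X⌋₊, (if U < (n : ℝ) then (Λ n : ℂ) * f n else 0)) := step4 f U V X hV hX0 hN1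
  -- Bounds
  have hb2 : ‖∑ v ∈ Icc 1 ⌊X⌋₊, (∑ p ∈ (v).divisorsAntidiagonal, (if (p.1 : ℝ) ≤ U ∧ (p.2 : ℝ) ≤ V then ((Λ p.1 : ℝ) : ℂ) * ((μ p.2 : ℤ) : ℂ) else 0)) * ∑ s ∈ Icc 1 ⌊X / (v:ℝ)⌋₊, f (s * v)‖ ≤ (∑ v ∈ Icc 1 ⌊U * V⌋₊, ‖∑ s ∈ Icc 1 ⌊X / v⌋₊, f (s * v)‖) * Real.log (U * V) := step5 f U V X hU hV
  have hb3 : ‖∑ d ∈ Icc 1 ⌊X⌋₊, ∑ h ∈ Icc 1 ⌊X⌋₊, (if d * h ≤ ⌊X⌋₊ ∧ (d : ℝ) ≤ V then ((μ d : ℤ) : ℂ) * ((Real.log h : ℝ) : ℂ) * f (h * d) else 0)‖ ≤ (∑ v ∈ Icc 1 ⌊V⌋₊, ⨆ w : ℕ, ‖∑ s ∈ Icc (w + 1) ⌊X / v⌋₊, f (s * v)‖) * Real.log X := step6 f V X hV hVX hX1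
  -- Assemble
  have hid : (∑ n ∈ Icc 1 ⌊X⌋₊, (if U < (n : ℝ) then (Λ n : ℂ) * f n else 0)) = (∑ d ∈ Icc 1 ⌊X⌋₊, ∑ h ∈ Icc 1 ⌊X⌋₊, (if d * h ≤ ⌊X⌋₊ ∧ (d : ℝ) ≤ V then ((μ d : ℤ) : ℂ) * ((Real.log h : ℝ) : ℂ) * f (h * d) else 0)) - (∑ v ∈ Icc 1 ⌊X⌋₊, (∑ p ∈ (v).divisorsAntidiagonal, (if (p.1 : ℝ) ≤ U ∧ (p.2 : ℝ) ≤ V then ((Λ p.1 : ℝ) : ℂ) * ((μ p.2 : ℤ) : ℂ) else 0)) * ∑ s ∈ Icc 1 ⌊X / (v:ℝ)⌋₊, f (s * v)) - (∑ u ∈ Icc 1 ⌊X⌋₊, ∑ v ∈ Icc 1 ⌊X⌋₊, if U < (u : ℝ) ∧ V < (v : ℝ) ∧ ((u * v : ℕ) : ℝ) ≤ X then (Λ u : ℂ) * (((∑ d ∈ (v).divisors.filter (fun d : ℕ => (d : ℝ) ≤ V), μ d : ℤ)) : ℂ) * f (u * v) else 0) := by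
    rw [h1, h2, h3, h4]; ring
  rw [hsplit, hid, one_mul]
  have tri : ‖(∑ n ∈ Icc 1 ⌊U⌋₊, (Λ n : ℂ) * f n) + ((∑ d ∈ Icc 1 ⌊X⌋₊, ∑ h ∈ Icc 1 ⌊X⌋₊, (if d * h ≤ ⌊X⌋₊ ∧ (d : ℝ) ≤ V then ((μ d : ℤ) : ℂ) * ((Real.log h : ℝ) : ℂ) * f (h * d) else 0)) - (∑ v ∈ Icc 1 ⌊X⌋₊, (∑ p ∈ (v).divisorsAntidiagonal, (if (p.1 : ℝ) ≤ U ∧ (p.2 : ℝ) ≤ V then ((Λ p.1 : ℝ) : ℂ) * ((μ p.2 : ℤ) : ℂ) else 0)) * ∑ s ∈ Icc 1 ⌊X / (v:ℝ)⌋₊, f (s * v)) - (∑ u ∈ Icc 1 ⌊X⌋₊, ∑ v ∈ Icc 1 ⌊X⌋₊, if U < (u : ℝ) ∧ V < (v : ℝ) ∧ ((u * v : ℕ) : ℝ) ≤ X then (Λ u : ℂ) * (((∑ d ∈ (v).divisors.filter (fun d : ℕ => (d : ℝ) ≤ V), μ d : ℤ)) : ℂ) * f (u * v) else 0))‖ 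≤
      ‖∑ n ∈ Icc 1 ⌊U⌋₊, (Λ n : ℂ) * f n‖ + ‖∑ d ∈ Icc 1 ⌊X⌋₊, ∑ h ∈ Icc 1 ⌊X⌋₊, (if d * h ≤ ⌊X⌋₊ ∧ (d : ℝ) ≤ V then ((μ d : ℤ) : ℂ) * ((Real.log h : ℝ) : ℂ) * f (h * d) else 0)‖ + ‖∑ v ∈ Icc 1 ⌊X⌋₊, (∑ p ∈ (v).divisorsAntidiagonal, (if (p.1 : ℝ) ≤ U ∧ (p.2 : ℝ) ≤ V then ((Λ p.1 : ℝ) : ℂ) * ((μ p.2 : ℤ) : ℂ) else 0)) * ∑ s ∈ Icc 1 ⌊X / (v:ℝ)⌋₊, f (s * v)‖ + ‖∑ u ∈ Icc 1 ⌊X⌋₊, ∑ v ∈ Icc 1 ⌊X⌋₊, if U < (u : ℝ) ∧ V < (v : ℝ) ∧ ((u * v : ℕ) : ℝ) ≤ X then (Λ u : ℂ) * (((∑ d ∈ (v).divisors.filter (fun d : ℕ => (d : ℝ) ≤ V), μ d : ℤ)) : ℂ) * f (u * v) else 0‖ := by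
    calc ‖(∑ n ∈ Icc 1 ⌊U⌋₊, (Λ n : ℂ) * f n) + ((∑ d ∈ Icc 1 ⌊X⌋₊, ∑ h ∈ Icc 1 ⌊X⌋₊, (if d * h ≤ ⌊X⌋₊ ∧ (d : ℝ) ≤ V then ((μ d : ℤ) : ℂ) * ((Real.log h : ℝ) : ℂ) * f (h * d) else 0)) - (∑ v ∈ Icc 1 ⌊X⌋₊, (∑ p ∈ (v).divisorsAntidiagonal, (if (p.1 : ℝ) ≤ U ∧ (p.2 : ℝ) ≤ V then ((Λ p.1 : ℝ) : ℂ) * ((μ p.2 : ℤ) : ℂ) else 0)) * ∑ s ∈ Icc 1 ⌊X / (v:ℝ)⌋₊, f (s * v)) - (∑ u ∈ Icc 1 ⌊X⌋₊, ∑ v ∈ Icc 1 ⌊X⌋₊, if U < (u : ℝ) ∧ V < (v : ℝ) ∧ ((u * v : ℕ) : ℝ) ≤ X then (Λ u : ℂ) * (((∑ d ∈ (v).divisors.filter (fun d : ℕ => (d : ℝ) ≤ V), μ d : ℤ)) : ℂ) * f (u * v) else 0))‖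
        ≤ ‖∑ n ∈ Icc 1 ⌊U⌋₊, (Λ n : ℂ) * f n‖ + ‖(∑ d ∈ Icc 1 ⌊X⌋₊, ∑ h ∈ Icc 1 ⌊X⌋₊, (if d * h ≤ ⌊X⌋₊ ∧ (d : ℝ) ≤ V then ((μ d : ℤ) : ℂ) * ((Real.log h : ℝ) : ℂ) * f (h * d) else 0)) - (∑ v ∈ Icc 1 ⌊X⌋₊, (∑ p ∈ (v).divisorsAntidiagonal, (if (p.1 : ℝ) ≤ U ∧ (p.2 : ℝ) ≤ V then ((Λ p.1 : ℝ) : ℂ) * ((μ p.2 : ℤ) : ℂ) else 0)) * ∑ s ∈ Icc 1 ⌊X / (v:ℝ)⌋₊, f (s * v)) - (∑ u ∈ Icc 1 ⌊X⌋₊, ∑ v ∈ Icc 1 ⌊X⌋₊, if U < (u : ℝ) ∧ V < (v : ℝ) ∧ ((u * v : ℕ) : ℝ) ≤ X then (Λ u : ℂ) * (((∑ d ∈ (v).divisors.filter (fun d : ℕ => (d : ℝ) ≤ V), μ d : ℤ)) : ℂ) * f (u * v) else 0)‖ := norm_add_le _ _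
      _ ≤ ‖∑ n ∈ Icc 1 ⌊U⌋₊, (Λ n : ℂ) * f n‖ + (‖(∑ d ∈ Icc 1 ⌊X⌋₊, ∑ h ∈ Icc 1 ⌊X⌋₊, (if d * h ≤ ⌊X⌋₊ ∧ (d : ℝ) ≤ V then ((μ d : ℤ) : ℂ) * ((Real.log h : ℝ) : ℂ) * f (h * d) else 0)) - (∑ v ∈ Icc 1 ⌊X⌋₊, (∑ p ∈ (v).divisorsAntidiagonal, (if (p.1 : ℝ) ≤ U ∧ (p.2 : ℝ) ≤ V then ((Λ p.1 : ℝ) : ℂ) * ((μ p.2 : ℤ) : ℂ) else 0)) * ∑ s ∈ Icc 1 ⌊X / (v:ℝ)⌋₊, f (s * v))‖ + ‖∑ u ∈ Icc 1 ⌊X⌋₊, ∑ v ∈ Icc 1 ⌊X⌋₊, if U < (u : ℝ) ∧ V < (v : ℝ) ∧ ((u * v : ℕ) : ℝ) ≤ X then (Λ u : ℂ) * (((∑ d ∈ (v).divisors.filter (fun d : ℕ => (d : ℝ) ≤ V), μ d : ℤ)) : ℂ) * f (u * v) else 0‖) := by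
          gcongr; exact norm_sub_le _ _
      _ ≤ ‖∑ n ∈ Icc 1 ⌊U⌋₊, (Λ n : ℂ) * f n‖ + (‖∑ d ∈ Icc 1 ⌊X⌋₊, ∑ h ∈ Icc 1 ⌊X⌋₊, (if d * h ≤ ⌊X⌋₊ ∧ (d : ℝ) ≤ V then ((μ d : ℤ) : ℂ) * ((Real.log h : ℝ) : ℂ) * f (h * d) else 0)‖ + ‖∑ v ∈ Icc 1 ⌊X⌋₊, (∑ p ∈ (v).divisorsAntidiagonal, (if (p.1 : ℝ) ≤ U ∧ (p.2 : ℝ) ≤ V then ((Λ p.1 : ℝ) : ℂ) * ((μ p.2 : ℤ) : ℂ) else 0)) * ∑ s ∈ Icc 1 ⌊X / (v:ℝ)⌋₊, f (s * v)‖ + ‖∑ u ∈ Icc 1 ⌊X⌋₊, ∑ v ∈ Icc 1 ⌊X⌋₊, if U < (u : ℝ) ∧ V < (v : ℝ) ∧ ((u * v : ℕ) : ℝ) ≤ X then (Λ u : ℂ) * (((∑ d ∈ (v).divisors.filter (fun d : ℕ => (d : ℝ) ≤ V), μ d : ℤ)) : ℂ) * f (u * v) else 0‖) := by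
          gcongr; exact norm_sub_le _ _
      _ = ‖∑ n ∈ Icc 1 ⌊U⌋₊, (Λ n : ℂ) * f n‖ + ‖∑ d ∈ Icc 1 ⌊X⌋₊, ∑ h ∈ Icc 1 ⌊X⌋₊, (if d * h ≤ ⌊X⌋₊ ∧ (d : ℝ) ≤ V then ((μ d : ℤ) : ℂ) * ((Real.log h : ℝ) : ℂ) * f (h * d) else 0)‖ + ‖∑ v ∈ Icc 1 ⌊X⌋₊, (∑ p ∈ (v).divisorsAntidiagonal, (if (p.1 : ℝ) ≤ U ∧ (p.2 : ℝ) ≤ V then ((Λ p.1 : ℝ) : ℂ) * ((μ p.2 : ℤ) : ℂ) else 0)) * ∑ s ∈ Icc 1 ⌊X / (v:ℝ)⌋₊, f (s * v)‖ + ‖∑ u ∈ Icc 1 ⌊X⌋₊, ∑ v ∈ Icc 1 ⌊X⌋₊, if U < (u : ℝ) ∧ V < (v : ℝ) ∧ ((u * v : ℕ) : ℝ) ≤ X then (Λ u : ℂ) * (((∑ d ∈ (v).divisors.filter (fun d : ℕ => (d : ℝ) ≤ V), μ d : ℤ)) : ℂ) * f (u * v) else 0‖ := by ring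
  refine tri.trans ?_
  linarith [hb2, hb3]
end

section
/- Let p be an odd prime, and let s, k be positive integers with 3s ≤ k. Let a, v be integers with gcd(av, p) = 1. Suppose m₁, m₂ are positive integers and ω₁, ω₂ are integers satisfying ω₁² ≡ a·m₁·v (mod p^k) and ω₂² ≡ a·m₂·v (mod p^k), and ω₁ ≡ ω₂ (mod p^s). If the p-adic order ord_p(ω₁ − ω₂) ≥ 3s, then m₁ ≡ m₂ (mod p^{3s}). Consequently, for any fixed such m₁ with m₁ ≤ M and any assignment m ↦ ω_m of integers with ω_m² ≡ a·m·v (mod p^k) and ω_m ≡ ω_{m₁} (mod p^s), the number of positive integers m₂ ≤ M with m₂ ≡ m₁ (mod p^s) and ord_p(ω_{m₁} − ω_{m₂}) ≥ 3s is at most M·p^{-3s} + 1. -/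
open scoped Classical

/-- The Hensel-lift separation claim from the proof of Theorem 1.1: if
`ω₁² ≡ a m₁ v`, `ω₂² ≡ a m₂ v (mod p^k)`, `ω₁ ≡ ω₂ (mod p^s)` and
`ord_p(ω₁ − ω₂) ≥ 3s` (i.e. `p^{3s} ∣ ω₁ − ω₂`), then `m₁ ≡ m₂ (mod p^{3s})`;
consequently for fixed `m₁ ≤ M` the number of `m₂ ≤ M` with
`m₂ ≡ m₁ (mod p^s)` and `ord_p(ω_{m₁} − ω_{m₂}) ≥ 3s` is at most `M p^{-3s} + 1`. -/
theorem hensel_lift_counting (p : ℕ) (hp : p.Prime) (hodd : Odd p)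
    (s k : ℕ) (hs : 0 < s) (hk : 0 < k) (hsk : 3 * s ≤ k)
    (a v : ℤ) (hav : Int.gcd (a * v) p = 1) :
    (∀ m₁ m₂ : ℕ, 0 < m₁ → 0 < m₂ → ∀ ω₁ ω₂ : ℤ,
        ω₁ ^ 2 ≡ a * m₁ * v [ZMOD ((p : ℤ) ^ k)] →
        ω₂ ^ 2 ≡ a * m₂ * v [ZMOD ((p : ℤ) ^ k)] →
        ω₁ ≡ ω₂ [ZMOD ((p : ℤ) ^ s)] →
        (p : ℤ) ^ (3 * s) ∣ (ω₁ - ω₂) →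
        (m₁ : ℤ) ≡ (m₂ : ℤ) [ZMOD ((p : ℤ) ^ (3 * s))]) ∧
    (∀ M : ℝ, ∀ m₁ : ℕ, 0 < m₁ → (m₁ : ℝ) ≤ M →
      ∀ ω : ℕ → ℤ,
        (∀ m : ℕ, 0 < m → (m : ℝ) ≤ M →
          (ω m) ^ 2 ≡ a * m * v [ZMOD ((p : ℤ) ^ k)] ∧
          ω m ≡ ω m₁ [ZMOD ((p : ℤ) ^ s)]) →
        (((Finset.Icc 1 ⌊M⌋₊).filter (fun m₂ : ℕ =>
            (m₂ : ℤ) ≡ (m₁ : ℤ) [ZMOD ((p : ℤ) ^ s)] ∧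
            (p : ℤ) ^ (3 * s) ∣ (ω m₁ - ω m₂))).card : ℝ) ≤
          M * (p : ℝ) ^ (-(3 * s : ℤ)) + 1) := by
  have hcop : Int.gcd (a * v) ((p:ℤ) ^ (3 * s)) = 1 := by
    have h1 : IsCoprime (a * v) (p:ℤ) := Int.isCoprime_iff_gcd_eq_one.mpr hav
    exact Int.isCoprime_iff_gcd_eq_one.mp (h1.pow_right)
  have sep : ∀ m₁ m₂ : ℕ, 0 < m₁ → 0 < m₂ → ∀ ω₁ ω₂ : ℤ,
        ω₁ ^ 2 ≡ a * m₁ * v [ZMOD ((p : ℤ) ^ k)] →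
        ω₂ ^ 2 ≡ a * m₂ * v [ZMOD ((p : ℤ) ^ k)] →
        ω₁ ≡ ω₂ [ZMOD ((p : ℤ) ^ s)] →
        (p : ℤ) ^ (3 * s) ∣ (ω₁ - ω₂) →
        (m₁ : ℤ) ≡ (m₂ : ℤ) [ZMOD ((p : ℤ) ^ (3 * s))] := by
    intro m₁ m₂ _ _ ω₁ ω₂ h₁ h₂ _ hdvd
    have hdk : ((p:ℤ) ^ (3*s)) ∣ (p:ℤ) ^ k := pow_dvd_pow _ hsk
    have hsq : (p:ℤ)^(3*s) ∣ ω₂^2 - ω₁^2 := by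
      have : ω₂^2 - ω₁^2 = (ω₁ - ω₂) * (-(ω₁ + ω₂)) := by ring
      rw [this]; exact hdvd.mul_right _
    have e3 : ω₁^2 ≡ ω₂^2 [ZMOD ((p:ℤ)^(3*s))] := Int.modEq_iff_dvd.mpr hsq
    have hmod : a * (m₁:ℤ) * v ≡ a * (m₂:ℤ) * v [ZMOD ((p:ℤ)^(3*s))] :=
      ((h₁.of_dvd hdk).symm.trans e3).trans (h₂.of_dvd hdk)
    have hmod2 : (a * v) * (m₁:ℤ) ≡ (a * v) * (m₂:ℤ) [ZMOD ((p:ℤ)^(3*s))] := by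
      have e1 : (a * v) * (m₁:ℤ) = a * (m₁:ℤ) * v := by ring
      have e2 : (a * v) * (m₂:ℤ) = a * (m₂:ℤ) * v := by ring
      rw [e1, e2]; exact hmod
    have h := hmod2.cancel_left_div_gcd (by exact_mod_cast pow_pos hp.pos (3*s)) 
    simpa [Int.gcd_comm, hcop] using h
  refine ⟨sep, ?_⟩
  intro M m₁ hm₁ hm₁M ω hω
  have hM0 : (0:ℝ) ≤ M := le_trans (by positivity) hm₁M
  set N := ⌊M⌋₊ with hN
  set q := p ^ (3 * s) with hqdef
  have hq : 0 < q := pow_pos hp.pos _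
  have hsub : ((Finset.Icc 1 N).filter (fun m₂ : ℕ =>
            (m₂ : ℤ) ≡ (m₁ : ℤ) [ZMOD ((p : ℤ) ^ s)] ∧
            (p : ℤ) ^ (3 * s) ∣ (ω m₁ - ω m₂))) ⊆
      (Finset.Icc 1 N).filter (fun n => n % q = m₁ % q) := by
    intro n hn
    simp only [Finset.mem_filter, Finset.mem_Icc] at hn ⊢
    obtain ⟨⟨h1, h2⟩, _, hdvd⟩ := hn
    refine ⟨⟨h1, h2⟩, ?_⟩
    have hnM : (n:ℝ) ≤ M := le_trans (Nat.cast_le.mpr h2) (Nat.floor_le hM0)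
    have hmm := sep m₁ n hm₁ h1 (ω m₁) (ω n) (hω m₁ hm₁ hm₁M).1 (hω n h1 hnM).1
      ((hω n h1 hnM).2).symm hdvd
    have hdv : ((q:ℕ):ℤ) ∣ (n:ℤ) - (m₁:ℤ) := by
      have := Int.ModEq.dvd hmm
      push_cast [hqdef]
      exact this
    have : (m₁:ℕ) ≡ n [MOD q] := (Nat.modEq_iff_dvd).mpr hdv
    exact this.symm
  have hcard : ((Finset.Icc 1 N).filter (fun n => n % q = m₁ % q)).card ≤ N / q + 1 := by
    classical
    set T := (Finset.Icc 1 N).filter (fun n => n % q = m₁ % q) with hT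
    have key : ∀ n ∈ T, n / q ∈ Finset.range (N / q + 1) := by
      intro n hn
      simp only [hT, Finset.mem_filter, Finset.mem_Icc] at hn
      simp only [Finset.mem_range]
      have : n / q ≤ N / q := Nat.div_le_div_right hn.1.2
      omega
    have inj : Set.InjOn (fun n => n / q) ↑T := by
      intro n1 hn1 n2 hn2 h
      simp only [hT, Finset.coe_filter, Set.mem_setOf_eq, Finset.mem_Icc] at hn1 hn2
      have h' : n1 / q = n2 / q := h
      calc n1 = q * (n1 / q) + n1 % q := (Nat.div_add_mod n1 q).symm
        _ = q * (n2 / q) + n2 % q := by rw [h', hn1.2, hn2.2]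
        _ = n2 := Nat.div_add_mod n2 q
    have := Finset.card_le_card_of_injOn _ key inj
    simpa using this
  have hcardR : (((Finset.Icc 1 N).filter (fun m₂ : ℕ =>
            (m₂ : ℤ) ≡ (m₁ : ℤ) [ZMOD ((p : ℤ) ^ s)] ∧
            (p : ℤ) ^ (3 * s) ∣ (ω m₁ - ω m₂))).card : ℝ) ≤ ((N / q + 1 : ℕ) : ℝ) := by
    exact_mod_cast le_trans (Finset.card_le_card hsub) hcard
  have hdivle : ((N / q : ℕ) : ℝ) ≤ M * (p : ℝ) ^ (-(3 * s : ℤ)) := by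
    have h1 : ((N / q : ℕ) : ℝ) ≤ (N : ℝ) / (q : ℝ) := Nat.cast_div_le
    have h2 : (N : ℝ) ≤ M := Nat.floor_le hM0
    have hpow : (p : ℝ) ^ (-(3 * s : ℤ)) = ((q:ℕ) : ℝ)⁻¹ := by
      rw [zpow_neg, hqdef]
      push_cast
      rw [← zpow_natCast (p:ℝ) (3*s)]
      norm_num
    rw [hpow]
    calc ((N / q : ℕ) : ℝ) ≤ (N : ℝ) / (q : ℝ) := h1
      _ ≤ M / (q : ℝ) := by
          gcongr
      _ = M * ((q:ℕ) : ℝ)⁻¹ := by rw [div_eq_mul_inv]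
  calc _ ≤ ((N / q + 1 : ℕ) : ℝ) := hcardR
    _ = ((N / q : ℕ) : ℝ) + 1 := by push_cast; ring
    _ ≤ M * (p : ℝ) ^ (-(3 * s : ℤ)) + 1 := by linarith
end
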